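/- Let τ > 0 and define the planar Hermite polynomials p_k(z) := τ^{k/2}·He_k(z/√τ), where He_k is the probabilists' Hermite polynomial (He_0 = 1, He_1(x) = x, He_{k+1}(x) = x·He_k(x) − k·He_{k−1}(x)). Then for all integers p, k ≥ 0 and all z ∈ ℂ: z^p·p_k(z) = Σ_{j=0}^{k+p} A_τ(p,j,k)·p_j(z). -/

import Mathlib

open Finset

/-- `1/n!` for an integer `n`, with the convention that `1/n! = 0` for negative `n`. -/
noncomputable def invfac (n : ℤ) : ℝ := if 0 ≤ n then ((n.toNat).factorial : ℝ)⁻¹ else 0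

/-- Binomial coefficient `binom(n, m)` for `n : ℕ`, `m : ℤ`, zero for `m < 0` or `m > n`. -/
noncomputable def zbinom (n : ℕ) (m : ℤ) : ℝ :=
  if 0 ≤ m ∧ m ≤ (n : ℤ) then (n.choose m.toNat : ℝ) else 0

/-- The Hermite expansion coefficients `A_τ(p, j, k)`:
`A_τ(p,j,k) = τ^{(p+k−j)/2} ∑_{l=0}^{⌊p/2⌋} [p!/(2^l l! ((p−k+j)/2−l)!)] binom(k, (p+k−j)/2−l)`
if `|j−k| ≤ p` and `j−k ≡ p (mod 2)` and `j ≥ 0`, and `0` otherwise. -/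
noncomputable def Aher (τ : ℝ) (p : ℕ) (j : ℤ) (k : ℕ) : ℝ :=
  if 0 ≤ j ∧ |j - (k : ℤ)| ≤ (p : ℤ) ∧ (j - (k : ℤ)) % 2 = (p : ℤ) % 2 then
    τ ^ ((((p : ℤ) + k - j) / 2).toNat) *
      ∑ l ∈ Finset.range (p / 2 + 1),
        (p.factorial : ℝ) * ((2 : ℝ) ^ l * (l.factorial : ℝ))⁻¹ *
          invfac (((p : ℤ) - k + j) / 2 - l) *
          zbinom k (((p : ℤ) + k - j) / 2 - l)
  else 0

/-- The probabilists' Hermite polynomial `He_k`, as a function on `ℂ`: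
`He_0 = 1`, `He_1(x) = x`, `He_{k+2}(x) = x He_{k+1}(x) − (k+1) He_k(x)`. -/
noncomputable def He : ℕ → ℂ → ℂ
  | 0, _ => 1
  | 1, x => x
  | (k + 2), x => x * He (k + 1) x - (k + 1) * He k x

/-! Induction on `p`, driven by the three-term recurrence `z p_j = p_{j+1} + τ j p_{j-1}`: it
reduces the claim to `A_τ(p+1,j,k) = A_τ(p,j-1,k) + τ (j+1) A_τ(p,j+1,k)`. Writing `j = p+k-2m`,
`A_τ(p,j,k) = τ^m ∑_l p!/(2^l l! (p-m-l)!) binom(k,m-l)`, and the recurrence for these sums holds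
term by term after splitting `p+1 = (p+1-m-l) + (m-l) + 2l`, each part being absorbed by one of
`n/n! = 1/(n-1)!`, `r binom(k,r) = (k-r+1) binom(k,r-1)` and `2l/(2^l l!) = 1/(2^(l-1) (l-1)!)`. -/

open scoped Nat

lemma invfac_of_neg {n : ℤ} (h : n < 0) : invfac n = 0 := by
  simp [invfac, not_le.mpr h]

lemma invfac_sub_one (n : ℤ) : invfac (n - 1) = n * invfac n := by
  rcases lt_trichotomy n 0 with h | rfl | h
  · simp [invfac_of_neg h, invfac_of_neg (show n - 1 < 0 by omega)]
  · simp [invfac_of_neg (show (-1 : ℤ) < 0 by omega)]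
  · obtain ⟨n, rfl⟩ : ∃ m : ℕ, n = m + 1 := ⟨(n - 1).toNat, by omega⟩
    simp only [invfac, add_sub_cancel_right, Int.toNat_natCast, Int.toNat_natCast_add_one]
    rw [if_pos (by positivity), if_pos (by positivity), Nat.factorial_succ]
    push_cast
    field_simp

lemma zbinom_eq_zero {k : ℕ} {m : ℤ} (h : m < 0 ∨ k < m) : zbinom k m = 0 := by
  rw [zbinom, if_neg (by omega)]

lemma mul_zbinom (k : ℕ) (r : ℤ) : r * zbinom k r = (k - r + 1) * zbinom k (r - 1) := by
  rcases lt_trichotomy r 0 with h | rfl | h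
  · simp [zbinom_eq_zero (.inl h), zbinom_eq_zero (.inl (show r - 1 < 0 by omega))]
  · simp [zbinom_eq_zero (.inl (show (-1 : ℤ) < 0 by omega))]
  obtain ⟨r, rfl⟩ : ∃ s : ℕ, r = s + 1 := ⟨(r - 1).toNat, by omega⟩
  rcases lt_trichotomy r k with hr | rfl | hr
  · simp only [zbinom, add_sub_cancel_right, Int.toNat_natCast, Int.toNat_natCast_add_one]
    rw [if_pos (by omega), if_pos (by omega)]
    have key := Nat.choose_succ_right_eq k r
    rw [← Nat.cast_inj (R := ℝ)] at key
    push_cast [Nat.cast_sub hr.le] at key ⊢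
    linear_combination key
  · rw [zbinom_eq_zero (.inr (by omega))]
    push_cast
    ring
  · rw [zbinom_eq_zero (.inr (by omega)), zbinom_eq_zero (.inr (by omega))]
    ring

lemma inv_two_pow_mul_factorial (l : ℕ) :
    ((2 : ℝ) ^ l * l !)⁻¹ = 2 * (l + 1) * ((2 : ℝ) ^ (l + 1) * (l + 1)!)⁻¹ := by
  rw [pow_succ, Nat.factorial_succ]
  push_cast
  field_simp

noncomputable def hermiteTerm (p k : ℕ) (m : ℤ) (l : ℕ) : ℝ :=
  p ! * ((2 : ℝ) ^ l * l !)⁻¹ * invfac (p - m - l) * zbinom k (m - l)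

lemma hermiteTerm_eq_zero {p k : ℕ} {m : ℤ} {l : ℕ} (h : p < m + l ∨ m < l ∨ k + l < m) :
    hermiteTerm p k m l = 0 := by
  rcases h with h | h
  · rw [hermiteTerm, invfac_of_neg (by omega), mul_zero, zero_mul]
  · rw [hermiteTerm, zbinom_eq_zero (by omega), mul_zero]

lemma hermiteTerm_succ_zero (p k : ℕ) (m : ℤ) :
    hermiteTerm (p + 1) k m 0 = hermiteTerm p k m 0 + (k - m + 1) * hermiteTerm p k (m - 1) 0 := by
  have hinv := invfac_sub_one (p + 1 - m)
  have hbin := mul_zbinom k m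
  simp only [hermiteTerm, Nat.factorial_succ, CharP.cast_eq_zero, sub_zero] at hinv hbin ⊢
  rw [show (p : ℤ) + 1 - m - 1 = p - m by ring] at hinv
  rw [show ((p + 1 : ℕ) : ℤ) - m = p + 1 - m by push_cast; ring,
    show (p : ℤ) - (m - 1) = p + 1 - m by ring, hinv]
  push_cast at hbin ⊢
  linear_combination (p ! : ℝ) * invfac (p + 1 - m) * hbin

lemma hermiteTerm_succ_succ (p k : ℕ) (m : ℤ) (l : ℕ) :
    hermiteTerm (p + 1) k m (l + 1) = hermiteTerm p k m (l + 1)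
      + (k - m + l + 2) * hermiteTerm p k (m - 1) (l + 1)
      + (p + 1 - m - l) * hermiteTerm p k (m - 1) l := by
  have hinv := invfac_sub_one (p - m - l)
  have hinv' := invfac_sub_one (p - m - l + 1)
  have hbin := mul_zbinom k (m - l - 1)
  have hc := inv_two_pow_mul_factorial l
  rw [add_sub_cancel_right] at hinv'
  simp only [hermiteTerm, Nat.factorial_succ p]
  rw [show ((p + 1 : ℕ) : ℤ) - m - ((l + 1 : ℕ) : ℤ) = p - m - l by push_cast; ring,
    show (p : ℤ) - m - ((l + 1 : ℕ) : ℤ) = p - m - l - 1 by push_cast; ring,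
    show (p : ℤ) - (m - 1) - ((l + 1 : ℕ) : ℤ) = p - m - l by push_cast; ring,
    show (p : ℤ) - (m - 1) - l = p - m - l + 1 by ring,
    show m - ((l + 1 : ℕ) : ℤ) = m - l - 1 by push_cast; ring,
    show m - 1 - ((l + 1 : ℕ) : ℤ) = m - l - 1 - 1 by push_cast; ring,
    show m - 1 - (l : ℤ) = m - l - 1 by ring, hinv, hc]
  push_cast at hbin hinv' ⊢
  linear_combination (p ! : ℝ) * ((2 : ℝ) ^ (l + 1) * (l + 1)!)⁻¹ * invfac (p - m - l) * hbin
    + (p ! : ℝ) * (2 * (l + 1)) * ((2 : ℝ) ^ (l + 1) * (l + 1)!)⁻¹ * zbinom k (m - l - 1) * hinv'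

noncomputable def hermiteSum (p k : ℕ) (m : ℤ) : ℝ :=
  ∑ l ∈ range (p + 1), hermiteTerm p k m l

lemma hermiteSum_eq_zero {p k : ℕ} {m : ℤ} (h : m < 0 ∨ p < m ∨ p + k < 2 * m) :
    hermiteSum p k m = 0 :=
  sum_eq_zero fun _ _ => hermiteTerm_eq_zero (by omega)

lemma hermiteSum_succ (p k : ℕ) (m : ℤ) :
    hermiteSum (p + 1) k m = hermiteSum p k m + (k + p + 2 - 2 * m) * hermiteSum p k (m - 1) := by
  have top (m' : ℤ) : hermiteTerm p k m' (p + 1) = 0 := hermiteTerm_eq_zero (by omega)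
  calc hermiteSum (p + 1) k m
      = ∑ l ∈ range (p + 2), hermiteTerm p k m l
        + ∑ l ∈ range (p + 2), (k - m + l + 1) * hermiteTerm p k (m - 1) l
        + ∑ l ∈ range (p + 1), (p + 1 - m - l) * hermiteTerm p k (m - 1) l := by
        rw [hermiteSum, sum_range_succ', sum_range_succ' (fun l => hermiteTerm p k m l),
          sum_range_succ' (fun l : ℕ => (k - m + l + 1) * hermiteTerm p k (m - 1) l)]
        have shift (l : ℕ) : (k : ℝ) - m + ((l + 1 : ℕ) : ℝ) + 1 = k - m + l + 2 := by
          push_cast; ring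
        simp only [hermiteTerm_succ_succ, hermiteTerm_succ_zero, sum_add_distrib, shift]
        push_cast
        ring
    _ = ∑ l ∈ range (p + 1), (hermiteTerm p k m l
          + (k + p + 2 - 2 * m) * hermiteTerm p k (m - 1) l) := by
        rw [sum_range_succ _ (p + 1), sum_range_succ _ (p + 1), top, top, mul_zero, add_zero,
          add_zero, add_assoc, ← sum_add_distrib, ← sum_add_distrib]
        refine sum_congr rfl fun l _ => ?_
        ring
    _ = _ := by rw [sum_add_distrib, ← mul_sum, hermiteSum, hermiteSum]

lemma Aher_eq_zero {τ : ℝ} {p : ℕ} {j : ℤ} {k : ℕ}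
    (h : j < 0 ∨ j + p < k ∨ k + p < j ∨ (j - k) % 2 ≠ p % 2) : Aher τ p j k = 0 := by
  rw [Aher, if_neg]
  rintro ⟨hj, habs, hpar⟩
  rw [abs_le] at habs
  omega

lemma Aher_zero_left (τ : ℝ) (j : ℤ) (k : ℕ) : Aher τ 0 j k = if j = k then 1 else 0 := by
  split_ifs with h
  · subst h
    rw [Aher, if_pos (by simp)]
    norm_num [invfac, zbinom]
  · exact Aher_eq_zero (by omega)

lemma Aher_add_sub_two_mul (τ : ℝ) (p k : ℕ) (m : ℤ) :
    Aher τ p (p + k - 2 * m) k = τ ^ m.toNat * hermiteSum p k m := by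
  by_cases hm : 0 ≤ m ∧ m ≤ p ∧ 2 * m ≤ p + k
  · rw [Aher, if_pos (by rw [abs_le]; omega), hermiteSum,
      show ((p : ℤ) + k - (p + k - 2 * m)) / 2 = m by omega,
      show ((p : ℤ) - k + (p + k - 2 * m)) / 2 = p - m by omega]
    congr 1
    refine sum_subset (range_subset_range.mpr (by omega)) fun l _ hl => ?_
    rw [mem_range] at hl
    exact hermiteTerm_eq_zero (by omega)
  · rw [Aher_eq_zero (by omega), hermiteSum_eq_zero (by omega), mul_zero]

lemma Aher_succ (τ : ℝ) (p : ℕ) (j : ℤ) (k : ℕ) :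
    Aher τ (p + 1) j k = Aher τ p (j - 1) k + τ * (j + 1) * Aher τ p (j + 1) k := by
  by_cases hpar : (j - k) % 2 = ((p + 1 : ℕ) : ℤ) % 2
  · obtain ⟨m, rfl⟩ : ∃ m : ℤ, j = ((p + 1 : ℕ) : ℤ) + k - 2 * m := ⟨(p + 1 + k - j) / 2, by omega⟩
    rw [Aher_add_sub_two_mul, hermiteSum_succ,
      show ((p + 1 : ℕ) : ℤ) + k - 2 * m - 1 = p + k - 2 * m by push_cast; ring,
      Aher_add_sub_two_mul,
      show ((p + 1 : ℕ) : ℤ) + k - 2 * m + 1 = p + k - 2 * (m - 1) by push_cast; ring,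
      Aher_add_sub_two_mul]
    rcases le_or_gt m 0 with hm | hm
    · rw [hermiteSum_eq_zero (m := m - 1) (.inl (by omega))]
      ring
    · rw [show m.toNat = (m - 1).toNat + 1 by omega, pow_succ]
      push_cast
      ring
  · push_cast at hpar
    rw [Aher_eq_zero (by omega), Aher_eq_zero (by omega), Aher_eq_zero (j := j + 1) (by omega)]
    ring

lemma He_succ (n : ℕ) (x : ℂ) : He (n + 1) x = x * He n x - n * He (n - 1) x := by
  cases n with
  | zero => simp [He]
  | succ n => rw [He]; push_cast; ring_nf

noncomputable def planarHermite (τ : ℝ) (j : ℕ) (z : ℂ) : ℂ :=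
  (Real.sqrt τ : ℂ) ^ j * He j (z / (Real.sqrt τ : ℂ))

lemma mul_planarHermite {τ : ℝ} (hτ : 0 < τ) (j : ℕ) (z : ℂ) :
    z * planarHermite τ j z = planarHermite τ (j + 1) z + τ * j * planarHermite τ (j - 1) z := by
  have hs : (Real.sqrt τ : ℂ) ≠ 0 := by exact_mod_cast (Real.sqrt_pos.mpr hτ).ne'
  have hs2 : (Real.sqrt τ : ℂ) ^ 2 = τ := by exact_mod_cast Real.sq_sqrt hτ.le
  cases j with
  | zero => simp only [planarHermite, He]; field_simp; ring
  | succ j =>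
    simp only [planarHermite, He_succ (j + 1), add_tsub_cancel_right]
    rw [← hs2]
    push_cast
    field_simp
    ring

lemma planarHermite_expansion {τ : ℝ} (hτ : 0 < τ) (p k : ℕ) (z : ℂ) {N : ℕ} (hN : k + p < N) :
    z ^ p * planarHermite τ k z = ∑ j ∈ range N, (Aher τ p j k : ℂ) * planarHermite τ j z := by
  induction p generalizing N with
  | zero =>
    rw [pow_zero, one_mul, sum_eq_single_of_mem k (mem_range.mpr (by omega)) fun j _ hj => ?_]
    · simp [Aher_zero_left]
    · simp [Aher_zero_left, hj]
  | succ p ih =>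
    obtain ⟨M, rfl⟩ : ∃ M, N = M + 1 := ⟨N - 1, by omega⟩
    have vanish {j : ℕ} (hj : k + p < j) : Aher τ p j k = 0 := Aher_eq_zero (j := j) (by omega)
    calc z ^ (p + 1) * planarHermite τ k z
        = ∑ j ∈ range (M + 1), (Aher τ p j k : ℂ) * (z * planarHermite τ j z) := by
          rw [pow_succ', mul_assoc, ih (N := M + 1) (by omega), mul_sum]
          exact sum_congr rfl fun j _ => by ring
      _ = ∑ j ∈ range (M + 1), (Aher τ p j k : ℂ) * planarHermite τ (j + 1) z
          + ∑ j ∈ range (M + 1), (Aher τ p j k : ℂ) * (τ * j * planarHermite τ (j - 1) z) := by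
          simp only [mul_planarHermite hτ, mul_add, sum_add_distrib]
      _ = ∑ j ∈ range (M + 1), (Aher τ p (j - 1) k : ℂ) * planarHermite τ j z
          + ∑ j ∈ range (M + 1), (τ * (j + 1) * Aher τ p (j + 1) k : ℂ) * planarHermite τ j z := by
          congr 1
          · conv_lhs => rw [sum_range_succ, vanish (by omega)]
            conv_rhs => rw [sum_range_succ', Nat.cast_zero, zero_sub, Aher_eq_zero (by omega)]
            push_cast
            simp
          · conv_lhs => rw [sum_range_succ']
            conv_rhs => rw [sum_range_succ, Aher_eq_zero (j := M + 1) (by omega)]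
            push_cast
            simp only [mul_zero, zero_mul, add_zero]
            exact sum_congr rfl fun j _ => by ring
      _ = ∑ j ∈ range (M + 1), (Aher τ (p + 1) j k : ℂ) * planarHermite τ j z := by
          rw [← sum_add_distrib]
          refine sum_congr rfl fun j _ => ?_
          rw [Aher_succ]
          push_cast
          ring

theorem planar_hermite_expansion (τ : ℝ) (hτ : 0 < τ) (p k : ℕ) (z : ℂ) :
    z ^ p * ((Real.sqrt τ : ℂ) ^ k * He k (z / (Real.sqrt τ : ℂ))) =
      ∑ j ∈ Finset.range (k + p + 1),
        (Aher τ p (j : ℤ) k : ℂ) * ((Real.sqrt τ : ℂ) ^ j * He j (z / (Real.sqrt τ : ℂ))) :=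
  planarHermite_expansion hτ p k z (Nat.lt_succ_self _)
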